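/- Suppose Σ_{j=1}^{N} a_j = Σ_{j=1}^{N} c_j. Then for every n ≥ 1, all real numbers k_1, ..., k_n, and every integer m with 1 ≤ m ≤ n, one has Σ_{i=1}^{2^{n-1}N} x_i^m = Σ_{i=1}^{2^{n-1}N} y_i^m, where x_i and y_i are the entries of the sequences x^{(n)} and y^{(n)} of length 2^{n-1}N produced by the doubling construction started from N initial terms on each side. -/

import Mathlib

/-!
Passing from level `t` to level `t + 1` appends to `x` the sequence `y` shifted by `K`, and
to `y` the sequence `x` shifted by `K`. Expanding `(y_i + K)^m` binomially, the `m`-th power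
sum of the shifted sequence differs from that of `y` only through lower power sums, so if `x`
and `y` agree in all power sums of degree `< m`, the two appended blocks contribute
`Σ x^m + Σ y^m` to both sides. Starting from equal first power sums, each level therefore
gains one more equal power sum.
-/

/-- The pair of sequences `(x^{(t+1)}, y^{(t+1)})` of length `2^t * N` (0-based internal
level `t` corresponds to the paper's level `m = t + 1`) produced by the doubling
construction started from the `N` initial terms `a 0, ..., a (N-1)` and
`c 0, ..., c (N-1)`.  `(seqXYN N a c k t i).1` is the `i`-th entry (0-based) of
`x^{(t+1)}` and `.2` that of `y^{(t+1)}`. -/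
noncomputable def seqXYN (N : ℕ) (a c : ℕ → ℝ) (k : ℕ → ℝ) : ℕ → ℕ → ℝ × ℝ
  | 0, i => (a i + k 1, c i + k 1)
  | t + 1, i =>
      if i < 2 ^ t * N then seqXYN N a c k t i
      else ((seqXYN N a c k t (i - 2 ^ t * N)).2 + k (t + 2),
            (seqXYN N a c k t (i - 2 ^ t * N)).1 + k (t + 2))

/-- `XN N a c k n i` is the entry `x_{i+1}` of the sequence `x^{(n)}` (for `n ≥ 1`,
`0 ≤ i < 2^(n-1) * N`). -/
noncomputable def XN (N : ℕ) (a c : ℕ → ℝ) (k : ℕ → ℝ) (n i : ℕ) : ℝ :=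
  (seqXYN N a c k (n - 1) i).1

/-- `YN N a c k n i` is the entry `y_{i+1}` of the sequence `y^{(n)}` (for `n ≥ 1`,
`0 ≤ i < 2^(n-1) * N`). -/
noncomputable def YN (N : ℕ) (a c : ℕ → ℝ) (k : ℕ → ℝ) (n i : ℕ) : ℝ :=
  (seqXYN N a c k (n - 1) i).2

open Finset

section PowerSums

variable {R ι : Type*} [CommRing R] (s : Finset ι)

theorem sum_add_pow_eq_sum_powerSums (u : ι → R) (K : R) (m : ℕ) :
    ∑ i ∈ s, (u i + K) ^ m =
      ∑ j ∈ range (m + 1), (∑ i ∈ s, u i ^ j) * K ^ (m - j) * m.choose j := by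
  simp_rw [add_pow, sum_mul]
  exact sum_comm

theorem sum_add_pow_sub_sum_add_pow {u v : ι → R} {m : ℕ}
    (h : ∀ j < m, ∑ i ∈ s, u i ^ j = ∑ i ∈ s, v i ^ j) (K : R) :
    ∑ i ∈ s, (u i + K) ^ m - ∑ i ∈ s, (v i + K) ^ m =
      ∑ i ∈ s, u i ^ m - ∑ i ∈ s, v i ^ m := by
  have lower : ∑ j ∈ range m, (∑ i ∈ s, u i ^ j) * K ^ (m - j) * m.choose j =
      ∑ j ∈ range m, (∑ i ∈ s, v i ^ j) * K ^ (m - j) * m.choose j :=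
    sum_congr rfl fun j hj => by rw [h j (mem_range.mp hj)]
  rw [sum_add_pow_eq_sum_powerSums, sum_add_pow_eq_sum_powerSums, sum_range_succ,
    sum_range_succ, lower]
  simp

end PowerSums

section Doubling

variable (N : ℕ) (a c k : ℕ → ℝ)

theorem seqXYN_succ_of_lt {t i : ℕ} (hi : i < 2 ^ t * N) :
    seqXYN N a c k (t + 1) i = seqXYN N a c k t i := by
  simp [seqXYN, hi]

theorem seqXYN_succ_add (t i : ℕ) :
    seqXYN N a c k (t + 1) (2 ^ t * N + i) =
      ((seqXYN N a c k t i).2 + k (t + 2), (seqXYN N a c k t i).1 + k (t + 2)) := by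
  simp [seqXYN]

theorem sum_range_seqXYN_succ (t : ℕ) (g : ℝ × ℝ → ℝ) :
    ∑ i ∈ range (2 ^ (t + 1) * N), g (seqXYN N a c k (t + 1) i) =
      ∑ i ∈ range (2 ^ t * N), g (seqXYN N a c k t i) +
        ∑ i ∈ range (2 ^ t * N),
          g ((seqXYN N a c k t i).2 + k (t + 2), (seqXYN N a c k t i).1 + k (t + 2)) := by
  rw [pow_succ, mul_two, add_mul, sum_range_add]
  simp only [seqXYN_succ_add]
  congr 1
  exact sum_congr rfl fun i hi => by rw [seqXYN_succ_of_lt N a c k (mem_range.mp hi)]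

theorem sum_seqXYN_pow_eq (h : ∑ j ∈ range N, a j = ∑ j ∈ range N, c j) :
    ∀ t, ∀ m ≤ t + 1, ∑ i ∈ range (2 ^ t * N), (seqXYN N a c k t i).1 ^ m =
      ∑ i ∈ range (2 ^ t * N), (seqXYN N a c k t i).2 ^ m := by
  intro t
  induction t with
  | zero =>
    intro m hm
    interval_cases m
    · simp
    · simp [seqXYN, sum_add_distrib, h]
  | succ t ih =>
    intro m hm
    have shifted := sum_add_pow_sub_sum_add_pow (range (2 ^ t * N))
      (fun j hj => (ih j (by omega)).symm) (k (t + 2)) (m := m)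
    rw [sum_range_seqXYN_succ N a c k t fun p => p.1 ^ m,
      sum_range_seqXYN_succ N a c k t fun p => p.2 ^ m]
    linear_combination shifted

end Doubling

theorem full_symmetric_system_N_general (N : ℕ) (a c : ℕ → ℝ)
    (h : ∑ j ∈ Finset.range N, a j = ∑ j ∈ Finset.range N, c j)
    (n : ℕ) (k : ℕ → ℝ) (m : ℕ) (hmn : m ≤ n) :
    ∑ i ∈ Finset.range (2 ^ (n - 1) * N), XN N a c k n i ^ m =
      ∑ i ∈ Finset.range (2 ^ (n - 1) * N), YN N a c k n i ^ m :=
  sum_seqXYN_pow_eq N a c k h (n - 1) m (by omega)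

theorem full_symmetric_system_N (N : ℕ) (hN : 1 ≤ N) (a c : ℕ → ℝ)
    (h : ∑ j ∈ Finset.range N, a j = ∑ j ∈ Finset.range N, c j)
    (n : ℕ) (hn : 1 ≤ n) (k : ℕ → ℝ) (m : ℕ) (hm1 : 1 ≤ m) (hmn : m ≤ n) :
    ∑ i ∈ Finset.range (2 ^ (n - 1) * N), XN N a c k n i ^ m =
      ∑ i ∈ Finset.range (2 ^ (n - 1) * N), YN N a c k n i ^ m :=
  full_symmetric_system_N_general N a c h n k m hmn
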